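/- Let σ > 1, z₀ ≥ 1 and w₀ > 0, and let z be a solution of the damped oscillator ODE with data (z₀, w₀). Then z(t) = z₀ + w₀(1 − e^{−t}) for all t ≥ 0; in particular z(t) ≥ 1 and Φ_σ'(z(t)) = 0 for all t ≥ 0, and |z(t) − (z₀ + w₀)| = w₀ e^{−t}, so z(t) converges exponentially to z₀ + w₀ as t → +∞. -/

import Mathlib

/-- The force `Φ_σ'` (derivative of the normalized adhesion potential with `u_* = 1`). -/
noncomputable def PhiD (σ u : ℝ) : ℝ :=
  if |u| ≤ 1 - 1/σ then 2*u
  else if 1 - 1/σ ≤ u ∧ u ≤ 1 then 2*(σ - 1)*(1 - u)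
  else if -1 ≤ u ∧ u ≤ -1 + 1/σ then -(2*(σ - 1)*(1 + u))
  else 0

/-! On `[1, ∞)` the force vanishes, so `z₀ + w₀ (1 - e^{-t})`, which starts at `z₀ ≥ 1`
and increases, solves the free equation `z'' + z' = 0` and hence the full one. Writing `Φ_σ'`
as a max/min of ramps shows that it is Lipschitz, so the first-order system
`(z, z')' = (z', -z' - Φ_σ'(z))` has unique solutions (Grönwall) and `z` is that explicit
solution. -/

open Real Set

-- `2 (σ - 1) (1 - u) - 2 u = 2 σ (1 - 1/σ - u)`: the `min` switches exactly at `u = 1 - 1/σ`.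
lemma phiD_eq_max_min {σ : ℝ} (hσ : 1 < σ) (u : ℝ) :
    PhiD σ u = max (min (2 * u) (2 * (σ - 1) * max 0 (1 - u)))
      (-(2 * (σ - 1) * max 0 (1 + u))) := by
  have hσ₀ : 0 < σ := by linarith
  have hinv : σ * (1 / σ) = 1 := by field_simp
  have hinv₁ : 1 / σ < 1 := (div_lt_one hσ₀).mpr hσ
  have hinv₀ : 0 < 1 / σ := by positivity
  unfold PhiD
  split_ifs with h₁ h₂ h₃
  · rw [abs_le] at h₁
    rw [max_eq_right (by linarith : (0 : ℝ) ≤ 1 - u),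
      max_eq_right (by linarith : (0 : ℝ) ≤ 1 + u),
      min_eq_left (by nlinarith), max_eq_left (by nlinarith)]
  · rw [max_eq_right (by linarith : (0 : ℝ) ≤ 1 - u),
      max_eq_right (by linarith : (0 : ℝ) ≤ 1 + u),
      min_eq_right (by nlinarith), max_eq_left (by nlinarith)]
  · rw [max_eq_right (by linarith : (0 : ℝ) ≤ 1 - u),
      max_eq_right (by linarith : (0 : ℝ) ≤ 1 + u),
      min_eq_left (by nlinarith), max_eq_right (by nlinarith)]
  · rw [abs_le, not_and_or, not_le, not_le] at h₁
    rcases h₁ with h₁ | h₁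
    · have hu : u < -1 := by
        by_contra! h
        exact h₃ ⟨h, by linarith⟩
      rw [max_eq_right (by linarith : (0 : ℝ) ≤ 1 - u), max_eq_left (by linarith : 1 + u ≤ 0),
        min_eq_left (by nlinarith), mul_zero, neg_zero, max_eq_right (by linarith)]
    · have hu : 1 < u := by
        by_contra! h
        exact h₂ ⟨by linarith, h⟩
      rw [max_eq_left (by linarith : 1 - u ≤ 0), max_eq_right (by linarith : (0 : ℝ) ≤ 1 + u),
        mul_zero, min_eq_right (by linarith), max_eq_left (by nlinarith)]

lemma lipschitzWith_phiD {σ : ℝ} (hσ : 1 < σ) : ∃ K, LipschitzWith K (PhiD σ) := by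
  have hlin : LipschitzWith _ fun u : ℝ => 2 * u := lipschitzWith_smul (2 : ℝ)
  have hright := (lipschitzWith_smul (2 * (σ - 1))).comp
    (((LipschitzWith.const 1).sub LipschitzWith.id).const_max 0)
  have hleft := ((lipschitzWith_smul (2 * (σ - 1))).comp
    (((LipschitzWith.const 1).add LipschitzWith.id).const_max 0)).neg
  rw [show PhiD σ = _ from funext (phiD_eq_max_min hσ)]
  exact ⟨_, (hlin.min hright).max hleft⟩

lemma phiD_eq_zero_of_one_le {σ u : ℝ} (hσ : 1 < σ) (hu : 1 ≤ u) : PhiD σ u = 0 := by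
  have hramp : 0 ≤ 2 * (σ - 1) * max 0 (1 + u) :=
    mul_nonneg (by linarith) (le_max_left _ _)
  rw [phiD_eq_max_min hσ, max_eq_left (by linarith : 1 - u ≤ 0), mul_zero,
    min_eq_right (by linarith), max_eq_left (by linarith)]

lemma eq_of_hasDerivAt_of_eqOn_Ioi {f f' g : ℝ → ℝ} {a : ℝ}
    (hf : ∀ x ≥ a, HasDerivAt f (f' x) x) (hg : ContinuousWithinAt g (Ioi a) a)
    (hfg : EqOn f' g (Ioi a)) : f' a = g a := by
  have hlim : HasDerivWithinAt f (g a) (Ici a) a := by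
    refine hasDerivWithinAt_Ici_of_tendsto_deriv (s := Ioi a)
      (fun x hx => (hf x hx.le).differentiableAt.differentiableWithinAt)
      (hf a le_rfl).continuousAt.continuousWithinAt self_mem_nhdsWithin ?_
    refine hg.tendsto.congr' (eventually_nhdsWithin_of_forall fun x hx => ?_)
    exact ((hf x hx.le).deriv.trans (hfg hx)).symm
  exact (uniqueDiffWithinAt_Ici a).eq_deriv _ (hf a le_rfl).hasDerivWithinAt hlim

structure IsDampedOscillatorSolution (F z z' z'' : ℝ → ℝ) : Prop where
  hasDerivAt : ∀ t ≥ (0:ℝ), HasDerivAt z (z' t) t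
  hasDerivAt_deriv : ∀ t ≥ (0:ℝ), HasDerivAt z' (z'' t) t
  ode : ∀ t > (0:ℝ), z'' t + z' t + F (z t) = 0

def dampedOscillatorField (F : ℝ → ℝ) (p : ℝ × ℝ) : ℝ × ℝ := (p.2, -p.2 - F p.1)

lemma LipschitzWith.dampedOscillatorField {F : ℝ → ℝ} {K : NNReal} (hF : LipschitzWith K F) :
    ∃ K', LipschitzWith K' (dampedOscillatorField F) :=
  ⟨_, LipschitzWith.prod_snd.prodMk
    (LipschitzWith.prod_snd.neg.sub (hF.comp LipschitzWith.prod_fst))⟩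

namespace IsDampedOscillatorSolution

variable {F z z' z'' : ℝ → ℝ}

lemma ode_of_nonneg (hF : Continuous F) (hz : IsDampedOscillatorSolution F z z' z'')
    {t : ℝ} (ht : 0 ≤ t) : z'' t + z' t + F (z t) = 0 := by
  suffices z'' t = -z' t - F (z t) by linarith
  rcases ht.eq_or_lt with rfl | ht
  · refine eq_of_hasDerivAt_of_eqOn_Ioi (g := fun s => -z' s - F (z s)) hz.hasDerivAt_deriv ?_
      fun s hs => ?_
    · exact ((hz.hasDerivAt_deriv 0 le_rfl).continuousAt.neg.sub
        (hF.continuousAt.comp (hz.hasDerivAt 0 le_rfl).continuousAt)).continuousWithinAt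
    · linarith [hz.ode s hs]
  · linarith [hz.ode t ht]

lemma hasDerivAt_phase (hF : Continuous F) (hz : IsDampedOscillatorSolution F z z' z'')
    {t : ℝ} (ht : 0 ≤ t) :
    HasDerivAt (fun s => (z s, z' s)) (dampedOscillatorField F (z t, z' t)) t := by
  convert (hz.hasDerivAt t ht).prodMk (hz.hasDerivAt_deriv t ht) using 1
  simp only [dampedOscillatorField, Prod.mk.injEq, true_and]
  linarith [hz.ode_of_nonneg hF ht]

theorem eqOn_Ici {K : NNReal} {y y' y'' : ℝ → ℝ} (hF : LipschitzWith K F)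
    (hz : IsDampedOscillatorSolution F z z' z'') (hy : IsDampedOscillatorSolution F y y' y'')
    (h0 : z 0 = y 0) (h0' : z' 0 = y' 0) : EqOn z y (Ici 0) := by
  intro t ht
  obtain ⟨K', hK'⟩ := hF.dampedOscillatorField
  have hphase := ODE_solution_unique (v := fun _ => dampedOscillatorField F) (a := 0) (b := t)
    (fun _ => hK')
    (HasDerivAt.continuousOn fun s hs => hz.hasDerivAt_phase hF.continuous hs.1)
    (fun s hs => (hz.hasDerivAt_phase hF.continuous hs.1).hasDerivWithinAt)
    (HasDerivAt.continuousOn fun s hs => hy.hasDerivAt_phase hF.continuous hs.1)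
    (fun s hs => (hy.hasDerivAt_phase hF.continuous hs.1).hasDerivWithinAt)
    (by rw [h0, h0'])
  exact congrArg Prod.fst (hphase ⟨ht, le_rfl⟩)

end IsDampedOscillatorSolution

lemma le_add_mul_one_sub_exp_neg (z₀ : ℝ) {w₀ t : ℝ} (hw₀ : 0 ≤ w₀) (ht : 0 ≤ t) :
    z₀ ≤ z₀ + w₀ * (1 - exp (-t)) :=
  le_add_of_nonneg_right (mul_nonneg hw₀ (sub_nonneg.2 (exp_le_one_iff.2 (neg_nonpos.2 ht))))

lemma isDampedOscillatorSolution_exp {F : ℝ → ℝ} {z₀ w₀ : ℝ} (hw₀ : 0 ≤ w₀)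
    (hF : ∀ u ≥ z₀, F u = 0) :
    IsDampedOscillatorSolution F (fun t => z₀ + w₀ * (1 - exp (-t)))
      (fun t => w₀ * exp (-t)) (fun t => -(w₀ * exp (-t))) where
  hasDerivAt t _ :=
    (((hasDerivAt_neg t).exp.const_sub 1).const_mul w₀).const_add z₀ |>.congr_deriv (by ring)
  hasDerivAt_deriv t _ :=
    (hasDerivAt_neg t).exp.const_mul w₀ |>.congr_deriv (by ring)
  ode t ht := by
    rw [hF _ (le_add_mul_one_sub_exp_neg z₀ hw₀ ht.le)]
    ring

theorem case_I (σ z₀ w₀ : ℝ) (hσ : 1 < σ) (hz₀ : 1 ≤ z₀) (hw₀ : 0 < w₀)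
    (z z' z'' : ℝ → ℝ)
    (hz : ∀ t ≥ (0:ℝ), HasDerivAt z (z' t) t)
    (hz' : ∀ t ≥ (0:ℝ), HasDerivAt z' (z'' t) t)
    (hode : ∀ t > (0:ℝ), z'' t + z' t + PhiD σ (z t) = 0)
    (h0 : z 0 = z₀) (h0' : z' 0 = w₀) :
    ∀ t ≥ (0:ℝ), z t = z₀ + w₀ * (1 - Real.exp (-t)) ∧ 1 ≤ z t ∧
      PhiD σ (z t) = 0 ∧ |z t - (z₀ + w₀)| = w₀ * Real.exp (-t) := by
  intro t ht
  obtain ⟨K, hK⟩ := lipschitzWith_phiD hσ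
  have hexp := isDampedOscillatorSolution_exp hw₀.le fun u hu =>
    phiD_eq_zero_of_one_le hσ (hz₀.trans hu)
  have hzt : z t = z₀ + w₀ * (1 - exp (-t)) :=
    IsDampedOscillatorSolution.eqOn_Ici hK ⟨hz, hz', hode⟩ hexp (by simp [h0]) (by simp [h0'])
      ht
  have h1 : 1 ≤ z t := hzt ▸ hz₀.trans (le_add_mul_one_sub_exp_neg z₀ hw₀.le ht)
  refine ⟨hzt, h1, phiD_eq_zero_of_one_le hσ h1, ?_⟩
  rw [hzt, show z₀ + w₀ * (1 - exp (-t)) - (z₀ + w₀) = -(w₀ * exp (-t)) by ring, abs_neg,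
    abs_of_pos (by positivity)]
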